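/- arXiv:2306.02645 — 2 statements merged into one kernel-verified Lean document; each statement's English description precedes it below -/
import Mathlib

section
/- Let Y be a Banach space and G : ℓ₁ → Y a norm-one operator. Then G is generating if and only if ‖G(e_n)‖ = 1 for every n ∈ ℕ, where (e_n) is the canonical basis of ℓ₁. -/
/-!
If every `‖G e_n‖ = 1`, all `±e_n` lie in `S_δ = {x ∈ B_ℓ₁ | 1 - δ < ‖G x‖}`, and every finite
partial sum `∑ x_i e_i` of a point `x` of the unit ball is a convex combination of the `±e_i` and
of `0 = (e_0 - e_0) / 2`, so the closed convex hull of `S_δ` is the whole ball.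

Conversely, for `x ∈ S_δ` we have `1 - δ < ‖G x‖ ≤ ‖G e_n‖ + ‖x - e_n‖ ≤ ‖G e_n‖ + 2 (1 - x_n)`,
so `S_δ` lies in a closed half-space `{x_n ≤ c}`; if `e_n` is in the closed convex hull of `S_δ`
then `1 ≤ c`, which reads `1 - δ ≤ ‖G e_n‖`.
-/

open Metric Set

theorem Convex.sum_smul_mem_of_zero_mem {𝕜 E ι : Type*} [Field 𝕜] [LinearOrder 𝕜]
    [IsStrictOrderedRing 𝕜] [AddCommGroup E] [Module 𝕜 E] {C : Set E} (hC : Convex 𝕜 C)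
    (h0 : 0 ∈ C) {s : Finset ι} {w : ι → 𝕜} {u : ι → E} (hw₀ : ∀ i ∈ s, 0 ≤ w i)
    (hw₁ : ∑ i ∈ s, w i ≤ 1) (hu : ∀ i ∈ s, u i ∈ C) : ∑ i ∈ s, w i • u i ∈ C := by
  rcases (Finset.sum_nonneg hw₀).eq_or_lt with hzero | hpos
  · have hw : ∀ i ∈ s, w i = 0 := (Finset.sum_eq_zero_iff_of_nonneg hw₀).mp hzero.symm
    rwa [Finset.sum_eq_zero fun i hi => by rw [hw i hi, zero_smul]]
  · have hmass : ∑ i ∈ s, w i • u i = (∑ i ∈ s, w i) • s.centerMass w u := by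
      rw [Finset.centerMass, smul_smul, mul_inv_cancel₀ hpos.ne', one_smul]
    rw [hmass]
    exact hC.smul_mem_of_zero_mem h0 (hC.centerMass_mem hw₀ hpos hu) ⟨hpos.le, hw₁⟩

namespace lp

variable {ι : Type*}

local notation "ℓ₁(" ι ")" => lp (fun _ : ι => ℝ) 1

theorem sum_norm_le_norm (x : ℓ₁(ι)) (s : Finset ι) : ∑ i ∈ s, ‖x i‖ ≤ ‖x‖ := by
  have hx := lp.hasSum_norm (p := 1) (by norm_num) x
  simp only [ENNReal.toReal_one, Real.rpow_one] at hx
  exact sum_le_hasSum s (fun i _ => norm_nonneg (x i)) hx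

variable [DecidableEq ι]

theorem norm_single_one (i : ι) : ‖(lp.single 1 i 1 : ℓ₁(ι))‖ = 1 := by
  simp [lp.norm_single]

theorem norm_sub_single_one_le {x : ℓ₁(ι)} (hx : ‖x‖ ≤ 1) (i : ι) :
    ‖x - lp.single 1 i 1‖ ≤ 2 * (1 - x i) := by
  have hcompl : ‖x - lp.single 1 i (x i)‖ = ‖x‖ - |x i| := by
    simpa using lp.norm_compl_sum_single (p := 1) (by norm_num) x {i}
  have hsplit : x - lp.single 1 i 1 = (x - lp.single 1 i (x i)) + lp.single 1 i (x i - 1) := by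
    rw [lp.single_sub, sub_add_sub_cancel]
  have hxi : |x i| ≤ 1 := (lp.norm_apply_le_norm one_ne_zero x i).trans hx
  calc ‖x - lp.single 1 i 1‖
      ≤ ‖x - lp.single 1 i (x i)‖ + ‖(lp.single 1 i (x i - 1) : ℓ₁(ι))‖ :=
        hsplit ▸ norm_add_le _ _
    _ = ‖x‖ - |x i| + |x i - 1| := by rw [hcompl, lp.norm_single one_pos, Real.norm_eq_abs]
    _ ≤ 2 * (1 - x i) := by
      rw [abs_sub_comm, abs_of_nonneg (sub_nonneg.mpr (abs_le.mp hxi).2)]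
      linarith [le_abs_self (x i)]

theorem closedBall_subset_closure_of_single_mem [Nonempty ι] {C : Set ℓ₁(ι)} (hC : Convex ℝ C)
    (hsingle : ∀ i, lp.single 1 i 1 ∈ C ∧ -lp.single 1 i 1 ∈ C) :
    closedBall 0 1 ⊆ closure C := by
  intro x hx
  have h0 : (0 : ℓ₁(ι)) ∈ C := by
    obtain ⟨i⟩ := ‹Nonempty ι›
    simpa using hC (hsingle i).1 (hsingle i).2 (by norm_num : (0 : ℝ) ≤ 1 / 2)
      (by norm_num : (0 : ℝ) ≤ 1 / 2) (by norm_num)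
  refine mem_closure_of_tendsto (lp.hasSum_single ENNReal.one_ne_top x)
    (Filter.Eventually.of_forall fun s => ?_)
  show ∑ i ∈ s, lp.single 1 i (x i) ∈ C
  let u : ι → ℓ₁(ι) := fun i => if 0 ≤ x i then lp.single 1 i 1 else -lp.single 1 i 1
  have hxu : ∑ i ∈ s, lp.single 1 i (x i) = ∑ i ∈ s, ‖x i‖ • u i := by
    refine Finset.sum_congr rfl fun i _ => ?_
    have hscale : (lp.single 1 i (x i) : ℓ₁(ι)) = x i • lp.single 1 i 1 := by
      rw [← lp.single_smul, smul_eq_mul, mul_one]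
    rw [hscale, Real.norm_eq_abs]
    simp only [u]
    split_ifs with hsign
    · rw [abs_of_nonneg hsign]
    · rw [abs_of_neg (not_le.mp hsign), smul_neg, neg_smul, neg_neg]
  rw [hxu]
  refine hC.sum_smul_mem_of_zero_mem h0 (fun i _ => norm_nonneg _)
    ((sum_norm_le_norm x s).trans (mem_closedBall_zero_iff.mp hx)) fun i _ => ?_
  by_cases hsign : 0 ≤ x i
  · simpa [u, hsign] using (hsingle i).1
  · simpa [u, hsign] using (hsingle i).2

theorem one_sub_le_norm_map_single {Y : Type*} [NormedAddCommGroup Y] [NormedSpace ℝ Y]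
    {G : ℓ₁(ι) →L[ℝ] Y} (hG : ‖G‖ ≤ 1) {δ : ℝ} {i : ι}
    (hmem : lp.single 1 i 1 ∈ closure (convexHull ℝ {x : ℓ₁(ι) | ‖x‖ ≤ 1 ∧ 1 - δ < ‖G x‖})) :
    1 - δ ≤ ‖G (lp.single 1 i 1)‖ := by
  set e : ℓ₁(ι) := lp.single 1 i 1
  let φ : ℓ₁(ι) →L[ℝ] ℝ := lp.evalCLM ℝ (fun _ => ℝ) 1 i
  set H := {x : ℓ₁(ι) | φ x ≤ (1 + δ + ‖G e‖) / 2}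
  have hS : {x : ℓ₁(ι) | ‖x‖ ≤ 1 ∧ 1 - δ < ‖G x‖} ⊆ H := by
    rintro x ⟨hx, hGx⟩
    have hdist : ‖G x‖ ≤ ‖G e‖ + ‖x - e‖ :=
      calc ‖G x‖ ≤ ‖G e‖ + ‖G (x - e)‖ := by simpa using norm_add_le (G e) (G (x - e))
        _ ≤ ‖G e‖ + ‖x - e‖ := by
          gcongr; exact (G.le_of_opNorm_le hG _).trans_eq (one_mul _)
    have := norm_sub_single_one_le hx i
    change x i ≤ _
    linarith
  have hH : closure (convexHull ℝ {x : ℓ₁(ι) | ‖x‖ ≤ 1 ∧ 1 - δ < ‖G x‖}) ⊆ H :=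
    closure_minimal (convexHull_min hS (convex_halfSpace_le φ.isLinear _))
      (isClosed_le φ.continuous continuous_const)
  have he : φ e = 1 := lp.single_apply_self (E := fun _ => ℝ) 1 i 1
  have := hH hmem
  change φ e ≤ _ at this
  rw [he] at this
  linarith

end lp

theorem stmt9_general {Y : Type*} [NormedAddCommGroup Y] [NormedSpace ℝ Y]
    (G : lp (fun _ : ℕ => ℝ) 1 →L[ℝ] Y) (hG : ‖G‖ = 1) :
    (∀ δ ∈ Set.Ioo (0:ℝ) 1,
        closure (convexHull ℝ {x : lp (fun _ : ℕ => ℝ) 1 | ‖x‖ ≤ 1 ∧ 1 - δ < ‖G x‖})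
          = Metric.closedBall (0 : lp (fun _ : ℕ => ℝ) 1) 1)
      ↔ ∀ n : ℕ, ‖G (lp.single 1 n (1:ℝ))‖ = 1 := by
  constructor
  · intro hgen n
    have hle : ‖G (lp.single 1 n 1)‖ ≤ 1 := by
      simpa [hG, lp.norm_single_one] using G.le_opNorm (lp.single 1 n 1)
    refine le_antisymm hle (le_of_not_gt fun hlt => ?_)
    set δ := (1 - ‖G (lp.single 1 n 1)‖) / 2 with hδ_def
    have hδ : δ ∈ Ioo (0 : ℝ) 1 := by
      constructor <;> linarith [norm_nonneg (G (lp.single 1 n 1))]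
    have hmem : lp.single 1 n 1 ∈ closure (convexHull ℝ {x | ‖x‖ ≤ 1 ∧ 1 - δ < ‖G x‖}) := by
      rw [hgen δ hδ, mem_closedBall_zero_iff, lp.norm_single_one]
    linarith [lp.one_sub_le_norm_map_single hG.le hmem]
  · intro h δ hδ
    set S := {x : lp (fun _ : ℕ => ℝ) 1 | ‖x‖ ≤ 1 ∧ 1 - δ < ‖G x‖}
    have hsingle (n : ℕ) :
        lp.single 1 n 1 ∈ convexHull ℝ S ∧ -lp.single 1 n 1 ∈ convexHull ℝ S := by
      refine ⟨subset_convexHull ℝ S ⟨?_, ?_⟩, subset_convexHull ℝ S ⟨?_, ?_⟩⟩ <;>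
        simp [h n, hδ.1]
    have hS : S ⊆ closedBall 0 1 := fun x hx => mem_closedBall_zero_iff.mpr hx.1
    exact (closure_minimal (convexHull_min hS (convex_closedBall 0 1)) isClosed_closedBall).antisymm
      (lp.closedBall_subset_closure_of_single_mem (convex_convexHull ℝ S) hsingle)

theorem stmt9 {Y : Type*} [NormedAddCommGroup Y] [NormedSpace ℝ Y] [CompleteSpace Y]
    (G : lp (fun _ : ℕ => ℝ) 1 →L[ℝ] Y) (hG : ‖G‖ = 1) :
    (∀ δ ∈ Set.Ioo (0:ℝ) 1,
        closure (convexHull ℝ {x : lp (fun _ : ℕ => ℝ) 1 | ‖x‖ ≤ 1 ∧ 1 - δ < ‖G x‖})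
          = Metric.closedBall (0 : lp (fun _ : ℕ => ℝ) 1) 1)
      ↔ ∀ n : ℕ, ‖G (lp.single 1 n (1:ℝ))‖ = 1 :=
  stmt9_general G hG
end

section
/- Let X₁, X₂, Y₁, Y₂ be Banach spaces and G₁ : X₁ → Y₁, G₂ : X₂ → Y₂ norm-one generating operators. Then the operator G : X₁ ⊕_∞ X₂ → Y₁ ⊕_∞ Y₂ defined by G(x₁, x₂) = (G₁x₁, G₂x₂) is generating. -/
/-!
The unit ball of `X₁ ⊕_∞ X₂` is the product of the two unit balls, and a pair of points at
which `G₁` and `G₂` are almost norming is a point at which `G₁ × G₂` is almost norming. Since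
convex hulls and closures commute with products, the unit ball of the sum is the closed convex
hull of the product of the two almost norming sets, which lies in the closed convex hull of the
almost norming set of `G₁ × G₂`.
-/

open Metric Set

theorem closure_convexHull_prod {E F : Type*} [AddCommGroup E] [Module ℝ E] [TopologicalSpace E]
    [AddCommGroup F] [Module ℝ F] [TopologicalSpace F] (s : Set E) (t : Set F) :
    closure (convexHull ℝ (s ×ˢ t)) = closure (convexHull ℝ s) ×ˢ closure (convexHull ℝ t) := by
  rw [convexHull_prod, closure_prod_eq]

section

variable {E F : Type*} [NormedAddCommGroup E] [NormedSpace ℝ E]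
  [NormedAddCommGroup F] [NormedSpace ℝ F]

def almostNormingSet (G : E →L[ℝ] F) (δ : ℝ) : Set E :=
  {x | ‖x‖ ≤ 1 ∧ 1 - δ < ‖G x‖}

theorem closure_convexHull_almostNormingSet_subset (G : E →L[ℝ] F) (δ : ℝ) :
    closure (convexHull ℝ (almostNormingSet G δ)) ⊆ closedBall 0 1 :=
  closure_minimal
    (convexHull_min (fun _ hx ↦ mem_closedBall_zero_iff.mpr hx.1) (convex_closedBall _ _))
    isClosed_closedBall

theorem almostNormingSet_prod_subset {E' F' : Type*} [NormedAddCommGroup E'] [NormedSpace ℝ E']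
    [NormedAddCommGroup F'] [NormedSpace ℝ F'] (G : E →L[ℝ] F) (G' : E' →L[ℝ] F') (δ : ℝ) :
    almostNormingSet G δ ×ˢ almostNormingSet G' δ ⊆ almostNormingSet (G.prodMap G') δ := by
  rintro ⟨x, x'⟩ ⟨⟨hx, hGx⟩, ⟨hx', -⟩⟩
  refine ⟨Prod.norm_mk x x' ▸ max_le hx hx', ?_⟩
  rw [ContinuousLinearMap.coe_prodMap', Prod.map_apply, Prod.norm_mk]
  exact lt_max_of_lt_left hGx

end

theorem stmt12_general {X₁ X₂ Y₁ Y₂ : Type*}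
    [NormedAddCommGroup X₁] [NormedSpace ℝ X₁]
    [NormedAddCommGroup X₂] [NormedSpace ℝ X₂]
    [NormedAddCommGroup Y₁] [NormedSpace ℝ Y₁]
    [NormedAddCommGroup Y₂] [NormedSpace ℝ Y₂]
    (G₁ : X₁ →L[ℝ] Y₁) (G₂ : X₂ →L[ℝ] Y₂)
    (hg₁ : ∀ δ > (0:ℝ),
      closure (convexHull ℝ {x : X₁ | ‖x‖ ≤ 1 ∧ 1 - δ < ‖G₁ x‖}) = Metric.closedBall (0:X₁) 1)
    (hg₂ : ∀ δ > (0:ℝ),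
      closure (convexHull ℝ {x : X₂ | ‖x‖ ≤ 1 ∧ 1 - δ < ‖G₂ x‖}) = Metric.closedBall (0:X₂) 1) :
    ∀ δ > (0:ℝ),
      closure (convexHull ℝ {p : X₁ × X₂ | ‖p‖ ≤ 1 ∧ 1 - δ < ‖(G₁.prodMap G₂) p‖})
        = Metric.closedBall (0 : X₁ × X₂) 1 := by
  intro δ hδ
  refine (closure_convexHull_almostNormingSet_subset (G₁.prodMap G₂) δ).antisymm ?_
  calc closedBall (0 : X₁ × X₂) 1
      = closedBall (0 : X₁) 1 ×ˢ closedBall (0 : X₂) 1 := (closedBall_prod_same _ _ _).symm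
    _ = closure (convexHull ℝ (almostNormingSet G₁ δ ×ˢ almostNormingSet G₂ δ)) := by
      rw [closure_convexHull_prod, almostNormingSet, almostNormingSet, hg₁ δ hδ, hg₂ δ hδ]
    _ ⊆ closure (convexHull ℝ (almostNormingSet (G₁.prodMap G₂) δ)) :=
      closure_mono (convexHull_mono (almostNormingSet_prod_subset G₁ G₂ δ))

theorem stmt12 {X₁ X₂ Y₁ Y₂ : Type*}
    [NormedAddCommGroup X₁] [NormedSpace ℝ X₁] [CompleteSpace X₁]
    [NormedAddCommGroup X₂] [NormedSpace ℝ X₂] [CompleteSpace X₂]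
    [NormedAddCommGroup Y₁] [NormedSpace ℝ Y₁] [CompleteSpace Y₁]
    [NormedAddCommGroup Y₂] [NormedSpace ℝ Y₂] [CompleteSpace Y₂]
    (G₁ : X₁ →L[ℝ] Y₁) (G₂ : X₂ →L[ℝ] Y₂) (h₁ : ‖G₁‖ = 1) (h₂ : ‖G₂‖ = 1)
    (hg₁ : ∀ δ > (0:ℝ),
      closure (convexHull ℝ {x : X₁ | ‖x‖ ≤ 1 ∧ 1 - δ < ‖G₁ x‖}) = Metric.closedBall (0:X₁) 1)
    (hg₂ : ∀ δ > (0:ℝ),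
      closure (convexHull ℝ {x : X₂ | ‖x‖ ≤ 1 ∧ 1 - δ < ‖G₂ x‖}) = Metric.closedBall (0:X₂) 1) :
    ∀ δ > (0:ℝ),
      closure (convexHull ℝ {p : X₁ × X₂ | ‖p‖ ≤ 1 ∧ 1 - δ < ‖(G₁.prodMap G₂) p‖})
        = Metric.closedBall (0 : X₁ × X₂) 1 :=
  stmt12_general G₁ G₂ hg₁ hg₂
end
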